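/- (Proposition 1: Lagrange operator as interior ball.) Let (ρ_x)_{x∈X} be a finite family of positive semidefinite 2×2 matrices with ρ_x = M(p_x, r_x), let p = max_{x∈X} p_x, and let σ = M(t, s) be Hermitian. Then σ − ρ_x is positive semidefinite for every x ∈ X if and only if t ≥ p and for every x ∈ X the closed Euclidean balls closedBall(s, t − p) and closedBall(r_x, p − p_x) in ℝ³ have nonempty intersection. -/

import Mathlib

/-!
Since `M(t, s) - M(p, r) = M(t - p, s - r)`, everything reduces to the criterion
`M(q, v) ⪰ 0 ↔ ‖v‖ ≤ q`. Its forward direction is `tr ≥ 0` and `det = (q² - ‖v‖²)/4 ≥ 0`;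
for the converse, the quadratic form of `M(q, v)` at `x` is `(q ‖x‖² + ⟪v, w⟫)/2`, where the
Bloch vector `w` of `x` has length `‖x‖²`, so Cauchy–Schwarz applies. Feasibility thus says
`dist s r_x ≤ t - p_x` for all `x`, and two closed balls in a real normed space meet exactly
when the distance of their centres is at most the sum of their radii.
-/

open scoped ComplexOrder

noncomputable def pauli1 : Matrix (Fin 2) (Fin 2) ℂ := !![0, 1; 1, 0]
noncomputable def pauli2 : Matrix (Fin 2) (Fin 2) ℂ := !![0, -Complex.I; Complex.I, 0]
noncomputable def pauli3 : Matrix (Fin 2) (Fin 2) ℂ := !![1, 0; 0, -1]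

/-- The Bloch representation `M(p, r) = (1/2)(p·I + r₁σ₁ + r₂σ₂ + r₃σ₃)` for `r ∈ ℝ³`. -/
noncomputable def blochMat (p : ℝ) (r : EuclideanSpace ℝ (Fin 3)) :
    Matrix (Fin 2) (Fin 2) ℂ :=
  (1/2 : ℂ) • ((p : ℂ) • (1 : Matrix (Fin 2) (Fin 2) ℂ)
    + (r 0 : ℂ) • pauli1 + (r 1 : ℂ) • pauli2 + (r 2 : ℂ) • pauli3)

open scoped Matrix

lemma blochMat_sub (t p : ℝ) (s r : EuclideanSpace ℝ (Fin 3)) :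
    blochMat t s - blochMat p r = blochMat (t - p) (s - r) := by
  ext i j
  fin_cases i <;> fin_cases j <;>
    (simp [blochMat, pauli1, pauli2, pauli3]; ring)

lemma trace_blochMat (q : ℝ) (v : EuclideanSpace ℝ (Fin 3)) : (blochMat q v).trace = q := by
  simp [Matrix.trace_fin_two, blochMat, pauli1, pauli2, pauli3]
  ring

lemma det_blochMat (q : ℝ) (v : EuclideanSpace ℝ (Fin 3)) :
    (blochMat q v).det = ((q ^ 2 - ‖v‖ ^ 2) / 4 : ℝ) := by
  simp [Matrix.det_fin_two, blochMat, pauli1, pauli2, pauli3, EuclideanSpace.norm_sq_eq,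
    Fin.sum_univ_three]
  apply Complex.ext <;> simp [sq] <;> ring

/-- The Bloch vector of `x ∈ ℂ²`: the coefficients of `x x*` in the Pauli basis. -/
noncomputable def blochVec (x : Fin 2 → ℂ) : EuclideanSpace ℝ (Fin 3) :=
  !₂[2 * (star (x 0) * x 1).re, 2 * (star (x 0) * x 1).im,
    Complex.normSq (x 0) - Complex.normSq (x 1)]

lemma norm_blochVec (x : Fin 2 → ℂ) :
    ‖blochVec x‖ = Complex.normSq (x 0) + Complex.normSq (x 1) := by
  rw [← Real.sqrt_sq (norm_nonneg _), EuclideanSpace.norm_sq_eq,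
    Real.sqrt_eq_iff_eq_sq (by positivity)
      (add_nonneg (Complex.normSq_nonneg _) (Complex.normSq_nonneg _))]
  simp [blochVec, Fin.sum_univ_three, Complex.normSq_apply]
  ring

lemma blochMat_quadForm (q : ℝ) (v : EuclideanSpace ℝ (Fin 3)) (x : Fin 2 → ℂ) :
    star x ⬝ᵥ (blochMat q v *ᵥ x) =
      (((q * (Complex.normSq (x 0) + Complex.normSq (x 1)) + inner ℝ v (blochVec x)) / 2 : ℝ)
        : ℂ) := by
  simp [blochMat, blochVec, pauli1, pauli2, pauli3, dotProduct, Matrix.mulVec,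
    Fin.sum_univ_two, Fin.sum_univ_three, Complex.normSq, PiLp.inner_apply]
  apply Complex.ext <;> simp <;> ring

lemma blochMat_isHermitian (q : ℝ) (v : EuclideanSpace ℝ (Fin 3)) :
    (blochMat q v).IsHermitian := by
  ext i j
  fin_cases i <;> fin_cases j <;>
    (simp [blochMat, pauli1, pauli2, pauli3]; ring)

lemma blochMat_posSemidef_iff (q : ℝ) (v : EuclideanSpace ℝ (Fin 3)) :
    (blochMat q v).PosSemidef ↔ ‖v‖ ≤ q := by
  constructor
  · intro h
    have htr : 0 ≤ q := by simpa [trace_blochMat] using h.trace_nonneg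
    have hdet : 0 ≤ q ^ 2 - ‖v‖ ^ 2 := by
      have := h.det_nonneg
      rw [det_blochMat, Complex.zero_le_real] at this
      linarith
    exact abs_le_of_sq_le_sq' (by linarith) htr |>.2
  · intro hq
    refine Matrix.posSemidef_iff_dotProduct_mulVec.mpr ⟨blochMat_isHermitian q v, fun x => ?_⟩
    rw [blochMat_quadForm, Complex.zero_le_real]
    have hCS := neg_le_of_abs_le (abs_real_inner_le_norm v (blochVec x))
    rw [norm_blochVec] at hCS
    have hx : 0 ≤ Complex.normSq (x 0) + Complex.normSq (x 1) :=
      add_nonneg (Complex.normSq_nonneg _) (Complex.normSq_nonneg _)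
    linarith [mul_le_mul_of_nonneg_right hq hx]

lemma blochMat_sub_posSemidef_iff (t p : ℝ) (s r : EuclideanSpace ℝ (Fin 3)) :
    (blochMat t s - blochMat p r).PosSemidef ↔ dist s r ≤ t - p := by
  rw [blochMat_sub, blochMat_posSemidef_iff, dist_eq_norm]

section Balls

variable {E : Type*} [SeminormedAddCommGroup E] [NormedSpace ℝ E]

lemma closedBall_inter_closedBall_nonempty_iff {x y : E} {δ ε : ℝ} (hδ : 0 ≤ δ) (hε : 0 ≤ ε) :
    (Metric.closedBall x δ ∩ Metric.closedBall y ε).Nonempty ↔ dist x y ≤ δ + ε := by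
  rw [← Set.not_disjoint_iff_nonempty_inter, disjoint_closedBall_closedBall_iff hδ hε, not_lt]

lemma forall_dist_le_sub_iff {ι : Type*} [Fintype ι] [Nonempty ι] (c : E) (y : ι → E)
    (w : ι → ℝ) (t : ℝ) :
    (∀ i, dist c (y i) ≤ t - w i) ↔
      (Finset.univ.sup' Finset.univ_nonempty w ≤ t ∧
        ∀ i, (Metric.closedBall c (t - Finset.univ.sup' Finset.univ_nonempty w) ∩
          Metric.closedBall (y i) (Finset.univ.sup' Finset.univ_nonempty w - w i)).Nonempty) := by
  set m := Finset.univ.sup' Finset.univ_nonempty w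
  have hw (i : ι) : w i ≤ m := Finset.le_sup' w (Finset.mem_univ i)
  constructor
  · intro hd
    obtain ⟨i₀, -, hi₀⟩ := Finset.exists_mem_eq_sup' Finset.univ_nonempty w
    have hm : m ≤ t := by linarith [hd i₀, dist_nonneg (x := c) (y := y i₀)]
    refine ⟨hm, fun i => ?_⟩
    rw [closedBall_inter_closedBall_nonempty_iff (by linarith) (by linarith [hw i])]
    linarith [hd i]
  · rintro ⟨hm, hballs⟩ i
    have := (closedBall_inter_closedBall_nonempty_iff (by linarith) (by linarith [hw i])).mp
      (hballs i)
    linarith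

end Balls

theorem blochMat_feasible_iff_interior_ball_general {X : Type*} [Fintype X] [Nonempty X]
    (pf : X → ℝ) (rv : X → EuclideanSpace ℝ (Fin 3))
    (ρ : X → Matrix (Fin 2) (Fin 2) ℂ)
    (hρdef : ∀ x, ρ x = blochMat (pf x) (rv x))
    (t : ℝ) (s : EuclideanSpace ℝ (Fin 3))
    (σ : Matrix (Fin 2) (Fin 2) ℂ)
    (hσdef : σ = blochMat t s) :
    (∀ x, (σ - ρ x).PosSemidef) ↔
      ((Finset.univ.sup' Finset.univ_nonempty pf) ≤ t ∧
       ∀ x, (Metric.closedBall s (t - Finset.univ.sup' Finset.univ_nonempty pf) ∩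
             Metric.closedBall (rv x) ((Finset.univ.sup' Finset.univ_nonempty pf) - pf x)).Nonempty) := by
  simp only [hσdef, hρdef, blochMat_sub_posSemidef_iff]
  exact forall_dist_le_sub_iff s rv pf t

/-- Proposition 1 (Lagrange operator as interior ball): with `p = max_x p_x`,
`σ = M(t, s)` satisfies `σ - ρ x ⪰ 0` for all `x` iff `t ≥ p` and for every `x`
the closed balls `closedBall s (t - p)` and `closedBall (r x) (p - p x)` intersect. -/
theorem blochMat_feasible_iff_interior_ball {X : Type*} [Fintype X] [Nonempty X]
    (pf : X → ℝ) (rv : X → EuclideanSpace ℝ (Fin 3))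
    (ρ : X → Matrix (Fin 2) (Fin 2) ℂ)
    (hρdef : ∀ x, ρ x = blochMat (pf x) (rv x))
    (hρ : ∀ x, (ρ x).PosSemidef)
    (t : ℝ) (s : EuclideanSpace ℝ (Fin 3))
    (σ : Matrix (Fin 2) (Fin 2) ℂ)
    (hσdef : σ = blochMat t s) :
    (∀ x, (σ - ρ x).PosSemidef) ↔
      ((Finset.univ.sup' Finset.univ_nonempty pf) ≤ t ∧
       ∀ x, (Metric.closedBall s (t - Finset.univ.sup' Finset.univ_nonempty pf) ∩
             Metric.closedBall (rv x) ((Finset.univ.sup' Finset.univ_nonempty pf) - pf x)).Nonempty) :=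
  blochMat_feasible_iff_interior_ball_general pf rv ρ hρdef t s σ hσdef
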